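/- arXiv:2308.10736 — 4 statements merged into one kernel-verified Lean document; each statement's English description precedes it below -/
import Mathlib

section
/- Let p be a prime. The formal power series X/log(1+X) ∈ ℚ_p[[X]] (the multiplicative inverse of log(1+X)/X = ∑_{k≥0} (-1)^k X^k/(k+1)) has coefficients b_k satisfying v_p(b_k) ≥ -k/(p-1) for all k ≥ 0, i.e. (p-1)*v_p(b_k) + k ≥ 0. -/
/-- The power series `log(1+X)/X = ∑_{k≥0} (-1)^k X^k/(k+1)` over `ℚ_[p]`. -/
noncomputable def logOneAddDivX (p : ℕ) [Fact p.Prime] : PowerSeries ℚ_[p] :=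
  PowerSeries.mk fun k => (-1 : ℚ_[p]) ^ k / ((k : ℚ_[p]) + 1)

/-!
Write `f = log(1+X)/X`. Since `(p-1)·v_p(k+1) ≤ k`, the coefficients of `f` satisfy
`‖a_k‖^(p-1) ≤ p^k`. A bound of this shape on the coefficients is preserved under products
and, by the ultrametric inequality, under sums, so the recursion
`b_n = -∑_{i+j=n, j<n} a_i b_j` for the coefficients of `f⁻¹` propagates it to every `b_n`.
-/

open PowerSeries

/-- Bernoulli's inequality `(p-1)·v + 1 ≤ p^v` against `p^v ≤ n`, where `v = v_p(n)`. -/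
theorem sub_one_mul_padicValNat_lt {p n : ℕ} (hn : n ≠ 0) : (p - 1) * padicValNat p n < n := by
  rcases Nat.eq_zero_or_pos p with rfl | hp
  · simpa using Nat.pos_of_ne_zero hn
  set v := padicValNat p n
  have hdvd : p ^ v ≤ n := Nat.le_of_dvd (Nat.pos_of_ne_zero hn) pow_padicValNat_dvd
  have hbern : 1 + (v : ℤ) * ((p : ℤ) - 1) ≤ (p : ℤ) ^ v :=
    one_add_mul_sub_le_pow (by omega) v
  zify [hp] at hdvd ⊢
  nlinarith

theorem PowerSeries.norm_coeff_invOfUnit_pow_le {R : Type*} [NormedRing R] [IsUltrametricDist R]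
    {f : R⟦X⟧} (hf : constantCoeff f = 1) {m : ℕ} {c : ℝ}
    (hfc : ∀ k, ‖coeff k f‖ ^ m ≤ c ^ k) (n : ℕ) :
    ‖coeff n (f.invOfUnit 1)‖ ^ m ≤ c ^ n := by
  induction n using Nat.strong_induction_on with
  | _ n ih =>
    rw [coeff_invOfUnit]
    split_ifs with hn
    · simpa [hn, ← hf] using hfc 0
    obtain ⟨⟨i, j⟩, hij, hsum⟩ := IsUltrametricDist.exists_norm_finsetSum_le_of_nonempty
      ⟨(0, n), Finset.HasAntidiagonal.mem_antidiagonal.mpr (zero_add n)⟩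
      (fun x => if x.2 < n then coeff x.1 f * coeff x.2 (f.invOfUnit 1) else 0)
    rw [Finset.HasAntidiagonal.mem_antidiagonal] at hij
    simp only [inv_one, Units.val_one, neg_mul, one_mul, norm_neg] at hsum ⊢
    refine (pow_le_pow_left₀ (norm_nonneg _) hsum m).trans ?_
    split_ifs at ⊢ with hj
    · calc ‖coeff i f * coeff j (f.invOfUnit 1)‖ ^ m
          ≤ ‖coeff i f‖ ^ m * ‖coeff j (f.invOfUnit 1)‖ ^ m := by
            rw [← mul_pow]; exact pow_le_pow_left₀ (norm_nonneg _) (norm_mul_le _ _) m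
        _ ≤ c ^ i * c ^ j := mul_le_mul (hfc i) (ih j hj) (by positivity)
            ((pow_nonneg (norm_nonneg _) m).trans (hfc i))
        _ = c ^ n := by rw [← pow_add, hij]
    · rw [norm_zero]
      exact (pow_le_pow_left₀ le_rfl (norm_nonneg _) m).trans (hfc n)

theorem Padic.norm_pow_le_prime_pow_iff {p : ℕ} [Fact p.Prime] {x : ℚ_[p]} (hx : x ≠ 0)
    (m k : ℕ) : ‖x‖ ^ m ≤ (p : ℝ) ^ k ↔ -(k : ℤ) ≤ m * x.valuation := by
  have hp : (1 : ℝ) < p := by exact_mod_cast (Fact.out : p.Prime).one_lt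
  rw [Padic.norm_eq_zpow_neg_valuation hx, ← zpow_natCast, ← zpow_mul, ← zpow_natCast (p : ℝ) k,
    zpow_le_zpow_iff_right₀ hp]
  constructor <;> intro h <;> linarith

variable {p : ℕ} [Fact p.Prime]

theorem constantCoeff_logOneAddDivX : constantCoeff (logOneAddDivX p) = 1 := by
  simp [logOneAddDivX, ← coeff_zero_eq_constantCoeff_apply]

theorem norm_coeff_logOneAddDivX (k : ℕ) :
    ‖coeff k (logOneAddDivX p)‖ = (p : ℝ) ^ padicValNat p (k + 1) := by
  have hne : ((k + 1 : ℕ) : ℚ_[p]) ≠ 0 := Nat.cast_ne_zero.mpr k.succ_ne_zero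
  rw [logOneAddDivX, coeff_mk, norm_div, norm_pow, norm_neg, norm_one, one_pow,
    ← Nat.cast_succ, Padic.norm_eq_zpow_neg_valuation hne, Padic.valuation_natCast, zpow_neg,
    one_div, inv_inv, zpow_natCast]

theorem norm_coeff_logOneAddDivX_pow_le (k : ℕ) :
    ‖coeff k (logOneAddDivX p)‖ ^ (p - 1) ≤ (p : ℝ) ^ k := by
  rw [norm_coeff_logOneAddDivX, ← pow_mul, mul_comm]
  exact pow_le_pow_right₀ (by exact_mod_cast (Fact.out : p.Prime).one_le)
    (Nat.lt_succ_iff.mp (sub_one_mul_padicValNat_lt k.succ_ne_zero))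

/-- the inverse power series `X/log(1+X)` exists and its coefficients `b_k`
satisfy `(p-1)·v_p(b_k) + k ≥ 0`, i.e. `v_p(b_k) ≥ -k/(p-1)`. -/
theorem stmt_5 (p : ℕ) [Fact p.Prime] :
    ∃ g : PowerSeries ℚ_[p], logOneAddDivX p * g = 1 ∧
      ∀ k : ℕ, 0 ≤ ((p : ℤ) - 1) * ((PowerSeries.coeff (R := ℚ_[p]) k) g).valuation + (k : ℤ) := by
  refine ⟨(logOneAddDivX p).invOfUnit 1,
    mul_invOfUnit _ _ (by rw [Units.val_one, constantCoeff_logOneAddDivX]), fun k => ?_⟩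
  by_cases hk : coeff k ((logOneAddDivX p).invOfUnit 1) = 0
  · simp [hk]
  have hbound := norm_coeff_invOfUnit_pow_le constantCoeff_logOneAddDivX
    (norm_coeff_logOneAddDivX_pow_le (p := p)) k
  rw [Padic.norm_pow_le_prime_pow_iff hk] at hbound
  have hp := (Fact.out : p.Prime).one_le
  push_cast [hp] at hbound
  linarith
end

section
/- Let A be a commutative ring, γ : A → A a ring homomorphism, and I an ideal of A with γ(I) ⊆ I. Assume that (γ - id)(A) ⊆ I and (γ - id)(I) ⊆ I². Then for every k ≥ 0 one has (γ - id)(I^k) ⊆ I^{k+1}, and consequently, for every x ∈ A and every k ≥ 0, the iterate (γ - id)^k(x) lies in I^k. -/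
/-- if `γ - id` maps `A` into `I` and `I` into `I²` (and `γ(I) ⊆ I`), then
`(γ - id)(I^k) ⊆ I^{k+1}` for all `k`, and `(γ - id)^[k] x ∈ I^k` for every `x` and `k`. -/
theorem stmt_6 {A : Type*} [CommRing A] (γ : A →+* A) (I : Ideal A)
    (hγI : ∀ a ∈ I, γ a ∈ I)
    (h1 : ∀ a : A, γ a - a ∈ I)
    (h2 : ∀ a ∈ I, γ a - a ∈ I ^ 2) :
    (∀ k : ℕ, ∀ x ∈ I ^ k, γ x - x ∈ I ^ (k + 1)) ∧
    (∀ (x : A) (k : ℕ), (fun a => γ a - a)^[k] x ∈ I ^ k) := by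
  have key : ∀ k : ℕ, ∀ x ∈ I ^ k, γ x - x ∈ I ^ (k + 1) := by
    intro k
    induction k with
    | zero => intro x _; simpa using h1 x
    | succ n ih =>
      intro x hx
      rw [pow_succ] at hx
      refine Submodule.mul_induction_on hx ?_ ?_
      · intro a ha b hb
        have hγa : γ a ∈ I ^ n := by
          have := ih a ha
          have h' : γ a = (γ a - a) + a := by ring
          rw [h']
          exact add_mem (Ideal.pow_le_pow_right (Nat.le_succ n) this) ha
        have h1' : γ a * (γ b - b) ∈ I ^ (n + 1 + 1) := by
          have : γ a * (γ b - b) ∈ I ^ n * I ^ 2 := Ideal.mul_mem_mul hγa (h2 b hb)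
          rwa [← pow_add] at this
        have h2' : (γ a - a) * b ∈ I ^ (n + 1 + 1) := by
          rw [pow_succ]
          exact Ideal.mul_mem_mul (ih a ha) hb
        have heq : γ (a * b) - a * b = γ a * (γ b - b) + (γ a - a) * b := by
          rw [map_mul]; ring
        rw [heq]
        exact add_mem h1' h2'
      · intro x y hx hy
        have : γ (x + y) - (x + y) = (γ x - x) + (γ y - y) := by
          rw [map_add]; ring
        rw [this]
        exact add_mem hx hy
  refine ⟨key, fun x k => ?_⟩
  induction k with
  | zero => simp
  | succ n ih =>
    rw [Function.iterate_succ_apply']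
    exact key n _ ih
end

section
/- Let p be a prime, N ∈ ℕ, and let f : C• → D• be a morphism of cochain complexes of abelian groups such that in every degree n, the kernel and cokernel of f^n : C^n → D^n are killed by p^N. Then for every n, the kernel and cokernel of the induced map on cohomology H^n(f) : H^n(C) → H^n(D) are killed by p^{2N}. -/
/-- a morphism `f` of cochain complexes of abelian groups which is a
degreewise `p^N`-isomorphism induces maps on cohomology whose kernels and cokernels are
killed by `p^(2N)`.  Cohomology classes in degree `n+1` are represented by cycles
`x` with `dC (n+1) x = 0`, modulo boundaries `dC n z`; quantifying over `n : ℤ` covers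
every degree. -/
theorem stmt_10 (p N : ℕ) (hp : p.Prime)
    (C D : ℤ → Type*) [∀ n, AddCommGroup (C n)] [∀ n, AddCommGroup (D n)]
    (dC : ∀ n, C n →+ C (n + 1)) (dD : ∀ n, D n →+ D (n + 1))
    (hdC : ∀ n (x : C n), dC (n + 1) (dC n x) = 0)
    (hdD : ∀ n (y : D n), dD (n + 1) (dD n y) = 0)
    (f : ∀ n, C n →+ D n)
    (hcomm : ∀ n (x : C n), f (n + 1) (dC n x) = dD n (f n x))
    (hker : ∀ n (x : C n), f n x = 0 → p ^ N • x = 0)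
    (hcoker : ∀ n (y : D n), ∃ x : C n, p ^ N • y = f n x) :
    (∀ n (x : C (n + 1)), dC (n + 1) x = 0 → (∃ y : D n, f (n + 1) x = dD n y) →
      ∃ z : C n, p ^ (2 * N) • x = dC n z) ∧
    (∀ n (y : D (n + 1)), dD (n + 1) y = 0 →
      ∃ (x : C (n + 1)) (w : D n), dC (n + 1) x = 0 ∧
        p ^ (2 * N) • y = f (n + 1) x + dD n w) := by
  constructor
  · intro n x hx ⟨y, hy⟩
    obtain ⟨z, hz⟩ := hcoker n y
    have hkerel : f (n + 1) (p ^ N • x - dC n z) = 0 := by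
      rw [map_sub, map_nsmul, hy, hcomm, ← hz, ← map_nsmul, sub_self]
    have := hker (n + 1) _ hkerel
    refine ⟨p ^ N • z, ?_⟩
    rw [smul_sub, sub_eq_zero] at this
    rw [two_mul, pow_add, mul_smul, this, map_nsmul]
  · intro n y hy
    obtain ⟨x, hx⟩ := hcoker (n + 1) y
    have hcyc : f (n + 1 + 1) (dC (n + 1) x) = 0 := by
      rw [hcomm, ← hx, map_nsmul, hy, smul_zero]
    have := hker (n + 1 + 1) _ hcyc
    refine ⟨p ^ N • x, 0, ?_, ?_⟩
    · rw [map_nsmul, this]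
    · rw [map_zero, add_zero, map_nsmul, ← hx, two_mul, pow_add, mul_smul]
end

section
/- Let p be a prime, A a commutative ring, σ : A → A a ring endomorphism, and π, q ∈ A with σ(π) = q·π and q - p·1 ∈ π·A. Let N be an A-module on which both π and q act injectively (are nonzerodivisors on N) and such that N/πN has no p-torsion. Let φ : N → N be an additive map that is σ-semilinear, i.e. φ(a·x) = σ(a)·φ(x) for a ∈ A, x ∈ N. For k ∈ ℤ define Fil^k N = {x ∈ N : φ(x) ∈ q^k N} (with Fil^k N = N for k ≤ 0). Then for every k ≥ 1 one has Fil^k N ∩ πN = π·Fil^{k-1} N as submodules of N. -/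
/-- abstract Wach-module filtration lemma: let `σ : A → A` be a ring
endomorphism, `π, q ∈ A` with `σ(π) = q·π` and `q ≡ p mod π`, and `N` an `A`-module on
which `π` and `q` act injectively and such that `N/πN` has no `p`-torsion.  For a
`σ`-semilinear additive map `φ : N → N`, setting `Fil^k N = {x : φ(x) ∈ q^k N}`, one has
`Fil^k N ∩ πN = π·Fil^(k-1) N` for every `k ≥ 1`. -/
theorem stmt_17 (p : ℕ) (hp : p.Prime) {A : Type*} [CommRing A] (σ : A →+* A) (π q : A)
    (hσπ : σ π = q * π) (hq : ∃ w : A, q = (p : A) + π * w)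
    {N : Type*} [AddCommGroup N] [Module A N]
    (hπinj : ∀ x : N, π • x = 0 → x = 0)
    (hqinj : ∀ x : N, q • x = 0 → x = 0)
    (hptf : ∀ x : N, (∃ y : N, (p : A) • x = π • y) → ∃ y : N, x = π • y)
    (φ : N → N) (hadd : ∀ x y : N, φ (x + y) = φ x + φ y)
    (hsemi : ∀ (a : A) (x : N), φ (a • x) = σ a • φ x)
    (k : ℕ) (hk : 1 ≤ k) :
    ∀ x : N, ((∃ y : N, φ x = q ^ k • y) ∧ (∃ z : N, x = π • z)) ↔
      (∃ z : N, x = π • z ∧ ∃ y : N, φ z = q ^ (k - 1) • y) := by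
  obtain ⟨w, hw⟩ := hq
  have hqk : q ^ k = q * q ^ (k - 1) := by rw [← pow_succ', Nat.sub_add_cancel hk]
  -- key lemma: π • m = q • n → ∃ n', n = π • n' ∧ m = q • n'
  have key : ∀ m n : N, π • m = q • n → ∃ n', n = π • n' ∧ m = q • n' := by
    intro m n h
    have h2 : π • m = (p : A) • n + π • (w • n) := by
      rw [h, hw, add_smul, mul_smul]
    have hpn : (p : A) • n = π • (m - w • n) := by
      rw [smul_sub, eq_sub_iff_add_eq, ← h2]
    obtain ⟨n', hn'⟩ := hptf n ⟨m - w • n, hpn⟩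
    refine ⟨n', hn', ?_⟩
    refine sub_eq_zero.mp (hπinj (m - q • n') ?_)
    rw [smul_sub, h, hn', smul_smul, smul_smul, mul_comm, sub_self]
  -- iterated: π • m = q^j • y → ∃ y', m = q^j • y'
  have iter : ∀ j : ℕ, ∀ m y : N, π • m = q ^ j • y → ∃ y', m = q ^ j • y' := by
    intro j
    induction j with
    | zero => intro m y h; exact ⟨m, by simp⟩
    | succ j ih =>
      intro m y h
      rw [pow_succ, mul_comm, mul_smul] at h
      obtain ⟨n', hn1, hn2⟩ := key m (q ^ j • y) h
      obtain ⟨y', hy'⟩ := ih n' y hn1.symm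
      exact ⟨y', by rw [hn2, hy', pow_succ, mul_comm, mul_smul]⟩
  intro x
  constructor
  · rintro ⟨⟨y, hy⟩, ⟨z, hz⟩⟩
    refine ⟨z, hz, ?_⟩
    have h1 : (q * π) • φ z = q ^ k • y := by
      rw [← hσπ, ← hsemi, ← hz, hy]
    have h2 : π • φ z = q ^ (k - 1) • y := by
      refine sub_eq_zero.mp (hqinj (π • φ z - q ^ (k - 1) • y) ?_)
      rw [smul_sub, smul_smul, smul_smul, ← hqk, h1, sub_self]
    obtain ⟨y', hy'⟩ := iter (k - 1) (φ z) y h2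
    exact ⟨y', hy'⟩
  · rintro ⟨z, hz, y, hy⟩
    refine ⟨⟨π • y, ?_⟩, ⟨z, hz⟩⟩
    rw [hz, hsemi, hσπ, hy, smul_smul, smul_smul]
    congr 1
    rw [hqk]; ring
end
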